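/- Assume M is a matroid on ground set T, M' an extension of M, and X, Y ⊆ E(M') are such that X ∩ T and Y ∩ T are disjoint coplanar lines in M, X ∩ Y is a flat in M', and X \ T ⊆ Y. If (X,Y) is a modular pair in M', then no point x of the line X ∩ T lies in cl_{M'}(Y). -/

import Mathlib

/-!
If `x ∈ X` lies in `cl(Y)`, submodularity for `X` and `Y ∪ {x}` gives
`r(X ∪ Y) + r((X ∩ Y) ∪ {x}) ≤ r(X) + r(Y) = r(X ∪ Y) + r(X ∩ Y)`, so `x ∈ cl(X ∩ Y) = X ∩ Y`;
but `x ∈ T` cannot lie in `Y`, since `X ∩ T` and `Y ∩ T` are disjoint.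
-/

open Set

namespace StickyKantor

variable {α : Type*}

/-- The rank of a set in a matroid, as an integer (junk value `0` when infinite). -/
noncomputable def rk (M : Matroid α) (X : Set α) : ℤ :=
  ((⨆ I ∈ {I : Set α | M.Indep I ∧ I ⊆ X}, I.encard).toNat : ℤ)

/-- The modular defect of a pair of sets. -/
noncomputable def mdefect (M : Matroid α) (X Y : Set α) : ℤ :=
  rk M X + rk M Y - rk M (X ∪ Y) - rk M (X ∩ Y)

/-- A modular pair of sets. -/
def ModularPair (M : Matroid α) (X Y : Set α) : Prop :=
  rk M X + rk M Y = rk M (X ∪ Y) + rk M (X ∩ Y)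

/-- `M'` is an extension of `M`: it has a larger ground set and restricts to `M`. -/
def IsExtension (M' M : Matroid α) : Prop :=
  M.E ⊆ M'.E ∧ M = M'.restrict M.E

/-- A point: a rank-1 flat. -/
def IsPoint (M : Matroid α) (p : Set α) : Prop := M.IsFlat p ∧ rk M p = 1

/-- A line: a rank-2 flat. -/
def IsLine (M : Matroid α) (l : Set α) : Prop := M.IsFlat l ∧ rk M l = 2

/-- A plane: a rank-3 flat. -/
def IsPlane (M : Matroid α) (e : Set α) : Prop := M.IsFlat e ∧ rk M e = 3

/-- Two lines are coplanar if their join has rank at most 3. -/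
def Coplanar (M : Matroid α) (l₁ l₂ : Set α) : Prop := rk M (l₁ ∪ l₂) ≤ 3

/-- A hyperplane: a maximal proper flat. -/
def IsHyperplane (M : Matroid α) (H : Set α) : Prop :=
  M.IsFlat H ∧ H ≠ M.E ∧ ∀ F, M.IsFlat F → H ⊂ F → F = M.E

/-- A matroid is hypermodular if every pair of hyperplanes is a modular pair. -/
def Hypermodular (M : Matroid α) : Prop :=
  ∀ H₁ H₂, IsHyperplane M H₁ → IsHyperplane M H₂ → ModularPair M H₁ H₂

/-- A matroid is modular if every pair of flats is a modular pair. -/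
def Modular (M : Matroid α) : Prop :=
  ∀ F₁ F₂, M.IsFlat F₁ → M.IsFlat F₂ → ModularPair M F₁ F₂

/-- A modular cut: an up-closed family of flats closed under intersections of
modular pairs. -/
def IsModularCut (M : Matroid α) (𝓜 : Set (Set α)) : Prop :=
  (∀ F ∈ 𝓜, M.IsFlat F) ∧
  (∀ F ∈ 𝓜, ∀ F', M.IsFlat F' → F ⊆ F' → F' ∈ 𝓜) ∧
  (∀ F₁ ∈ 𝓜, ∀ F₂ ∈ 𝓜, ModularPair M F₁ F₂ → F₁ ∩ F₂ ∈ 𝓜)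

/-- The principal modular cut of a flat `F`. -/
def principalCut (M : Matroid α) (F : Set α) : Set (Set α) :=
  {G | M.IsFlat G ∧ F ⊆ G}

/-- The modular cut generated by a family of flats. -/
def genCut (M : Matroid α) (A : Set (Set α)) : Set (Set α) :=
  ⋂₀ {𝓜 | IsModularCut M 𝓜 ∧ A ⊆ 𝓜}

/-- A non-modular pair of flats is intersectable if the modular cut it generates is
not the principal modular cut of its intersection. -/
def Intersectable (M : Matroid α) (X Y : Set α) : Prop :=
  genCut M {X, Y} ≠ principalCut M (X ∩ Y)

/-- A matroid is OTE (only trivially extendable) if every nonempty modular cut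
is principal. -/
def OTE (M : Matroid α) : Prop :=
  ∀ 𝓜, IsModularCut M 𝓜 → 𝓜 ≠ ∅ → ∃ F, M.IsFlat F ∧ 𝓜 = principalCut M F

/-- A matroid is sticky if every pair of extensions meeting exactly in its ground set
has an amalgam. -/
def Sticky (M : Matroid α) : Prop :=
  ∀ N₁ N₂ : Matroid α, IsExtension N₁ M → IsExtension N₂ M → N₁.E ∩ N₂.E = M.E →
    ∃ A : Matroid α, A.E = N₁.E ∪ N₂.E ∧ IsExtension A N₁ ∧ IsExtension A N₂

/-- The function `η` of the amalgam construction. -/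
noncomputable def eta (M M₁ M₂ : Matroid α) (X : Set α) : ℤ :=
  rk M₁ (X ∩ M₁.E) + rk M₂ (X ∩ M₂.E) - rk M (X ∩ M.E)

/-- The function `ξ` of the amalgam construction. -/
noncomputable def xi (M M₁ M₂ : Matroid α) (X : Set α) : ℤ :=
  sInf {n : ℤ | ∃ Y, X ⊆ Y ∧ Y ⊆ M₁.E ∪ M₂.E ∧ n = eta M M₁ M₂ Y}

/-- The lattice `𝓛(M₁,M₂)` of sets whose traces on both ground sets are flats. -/
def latticeL (M₁ M₂ : Matroid α) : Set (Set α) :=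
  {X | X ⊆ M₁.E ∪ M₂.E ∧ M₁.IsFlat (X ∩ M₁.E) ∧ M₂.IsFlat (X ∩ M₂.E)}

lemma _root_.Matroid.iSup_encard_indep_subset_eq_eRk (M : Matroid α) (X : Set α) :
    ⨆ I ∈ {I : Set α | M.Indep I ∧ I ⊆ X}, I.encard = M.eRk X := by
  refine le_antisymm (iSup₂_le fun I hI => hI.1.encard_le_eRk_of_subset hI.2) ?_
  obtain ⟨I, hI⟩ := M.exists_isBasis' X
  rw [hI.eRk_eq_encard]
  exact le_iSup₂_of_le I ⟨hI.indep, hI.subset⟩ le_rfl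

lemma _root_.Matroid.eRk_insert_eq_of_mem_closure {M : Matroid α} {x : α} {Y : Set α}
    (hx : x ∈ M.closure Y) : M.eRk (insert x Y) = M.eRk Y := by
  rw [← M.eRk_insert_closure_eq, insert_eq_of_mem hx, M.eRk_closure_eq]

lemma rk_eq_toNat_eRk (M : Matroid α) (X : Set α) : rk M X = ((M.eRk X).toNat : ℤ) := by
  simp only [rk, M.iSup_encard_indep_subset_eq_eRk]

lemma modularPair_iff_eRk {M : Matroid α} [M.RankFinite] {X Y : Set α} :
    ModularPair M X Y ↔ M.eRk X + M.eRk Y = M.eRk (X ∪ Y) + M.eRk (X ∩ Y) := by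
  have hnat (S : Set α) : ∃ n : ℕ, (n : ℕ∞) = M.eRk S :=
    ENat.ne_top_iff_exists.1 (M.eRk_ne_top_iff.2 (Matroid.RankFinite.isRkFinite S))
  obtain ⟨a, ha⟩ := hnat X
  obtain ⟨b, hb⟩ := hnat Y
  obtain ⟨c, hc⟩ := hnat (X ∪ Y)
  obtain ⟨d, hd⟩ := hnat (X ∩ Y)
  simp only [ModularPair, rk_eq_toNat_eRk, ← ha, ← hb, ← hc, ← hd, ENat.toNat_natCast]
  norm_cast

lemma ModularPair.mem_closure_inter {M : Matroid α} [M.RankFinite] {X Y : Set α} {x : α}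
    (hmod : ModularPair M X Y) (hxX : x ∈ X) (hxY : x ∈ M.closure Y) :
    x ∈ M.closure (X ∩ Y) := by
  by_contra hx
  have hxE : x ∈ M.E := M.closure_subset_ground Y hxY
  have hsub := M.eRk_submod X (insert x Y)
  rw [inter_insert_of_mem hxX, union_insert, insert_eq_of_mem (mem_union_left Y hxX),
    Matroid.eRk_insert_eq_of_mem_closure hxY, Matroid.eRk_insert_eq_add_one ⟨hxE, hx⟩,
    modularPair_iff_eRk.1 hmod, add_comm, ← add_assoc] at hsub
  have hfin : M.eRk (X ∪ Y) + M.eRk (X ∩ Y) ≠ ⊤ := by simp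
  exact ((ENat.add_one_le_iff hfin).1 hsub).false

theorem not_in_closure_general (M M' : Matroid α) [M'.RankFinite] (X Y : Set α)
    (hdisj : (X ∩ M.E) ∩ (Y ∩ M.E) = ∅) (hflat : M'.IsFlat (X ∩ Y))
    (hmod : ModularPair M' X Y) :
    ∀ x ∈ X ∩ M.E, x ∉ M'.closure Y := by
  rintro x ⟨hxX, hxT⟩ hxY
  have hx : x ∈ X ∩ Y := hflat.closure ▸ hmod.mem_closure_inter hxX hxY
  exact hdisj.subset ⟨⟨hxX, hxT⟩, hx.2, hxT⟩

/-- under the assumptions (D) with `X \ T ⊆ Y`, if `(X,Y)` is a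
modular pair in `M'` then no point of the line `X ∩ T` lies in `cl_{M'}(Y)`. -/
theorem not_in_closure (M M' : Matroid α) [M.RankFinite] [M'.RankFinite]
    (hext : IsExtension M' M) (X Y : Set α)
    (hX : X ⊆ M'.E) (hY : Y ⊆ M'.E)
    (hlX : IsLine M (X ∩ M.E)) (hlY : IsLine M (Y ∩ M.E))
    (hdisj : (X ∩ M.E) ∩ (Y ∩ M.E) = ∅)
    (hcop : Coplanar M (X ∩ M.E) (Y ∩ M.E))
    (hflat : M'.IsFlat (X ∩ Y)) (hXY : X \ M.E ⊆ Y)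
    (hmod : ModularPair M' X Y) :
    ∀ x ∈ X ∩ M.E, x ∉ M'.closure Y :=
  not_in_closure_general M M' X Y hdisj hflat hmod

end StickyKantor
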